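/- Let α ∈ ℝ, let u : ℝ → ℝ be infinitely differentiable, and fix x ∈ ℝ. For h ≠ 0 define the 6th-order centered difference discretisation of the Kuramoto–Sivashinsky right-hand side applied to u at x: I(h) := −(α/h)·( u(x)(δμu)(x) − (1/6)u(x)(δ³μu)(x) + (1/30)u(x)(δ⁵μu)(x) ) − (α/h²)·( (δ²u)(x) − (1/12)(δ⁴u)(x) + (1/90)(δ⁶u)(x) ) − (4/h⁴)·( (δ⁴u)(x) − (1/6)(δ⁶u)(x) + (7/240)(δ⁸u)(x) ), with difference operators of step h. Then, as h → 0, I(h) = −α( u(x)u′(x) + u″(x) ) − 4u⁗(x) + O(h⁶); that is, the scheme is sixth-order consistent with the Kuramoto–Sivashinsky equation. -/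

import Mathlib

open Filter Topology Asymptotics

/-- Centered difference operator of step `h`: `(δf)(x) = f(x + h/2) - f(x - h/2)`. -/
noncomputable def cdel (h : ℝ) (f : ℝ → ℝ) : ℝ → ℝ := fun x => f (x + h / 2) - f (x - h / 2)

/-- Centered mean operator of step `h`: `(μf)(x) = (f(x + h/2) + f(x - h/2))/2`. -/
noncomputable def cmu (h : ℝ) (f : ℝ → ℝ) : ℝ → ℝ := fun x => (f (x + h / 2) + f (x - h / 2)) / 2

open Finset Nat in
open scoped ContDiff in
private theorem taylor_bigO (n : ℕ) (g : ℝ → ℝ) (hg : ContDiff ℝ ∞ g) :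
    (fun h : ℝ => g h - ∑ k ∈ Finset.range n, iteratedDeriv k g 0 * h ^ k / k !) =O[𝓝 (0:ℝ)]
      fun h => h ^ n := by
  induction n generalizing g with
  | zero =>
    simpa using (hg.continuous.tendsto 0).isBigO_one ℝ
  | succ n ih =>
    obtain ⟨hdiff, hgd⟩ := contDiff_infty_iff_deriv.mp hg
    set F : ℝ → ℝ := fun h => g h - ∑ k ∈ Finset.range (n+1), iteratedDeriv k g 0 * h ^ k / k !
      with hF
    have hF0 : F 0 = 0 := by
      simp only [hF]
      rw [Finset.sum_eq_single 0]
      · simp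
      · intro k _ hk
        simp [zero_pow hk]
      · simp
    have hFd : ∀ h : ℝ, HasDerivAt F
        (deriv g h - ∑ k ∈ Finset.range n, iteratedDeriv k (deriv g) 0 * h ^ k / k !) h := by
      intro h
      have h1 : HasDerivAt (fun h : ℝ => ∑ k ∈ Finset.range (n+1),
            iteratedDeriv k g 0 * h ^ k / k !)
          (∑ k ∈ Finset.range (n+1), iteratedDeriv k g 0 * ((k : ℝ) * h ^ (k-1)) / k !) h := by
        apply HasDerivAt.fun_sum
        intro k _
        exact ((hasDerivAt_pow k h).const_mul (iteratedDeriv k g 0)).div_const _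
      have h2 : (∑ k ∈ Finset.range (n+1), iteratedDeriv k g 0 * ((k : ℝ) * h ^ (k-1)) / k !)
          = ∑ k ∈ Finset.range n, iteratedDeriv k (deriv g) 0 * h ^ k / k ! := by
        rw [Finset.sum_range_succ']
        simp only [Nat.cast_zero, zero_mul, mul_zero, Nat.factorial_zero, Nat.cast_one,
          zero_div, add_zero]
        apply Finset.sum_congr rfl
        intro k _
        rw [← iteratedDeriv_succ', Nat.add_sub_cancel, Nat.factorial_succ]
        have hkf : (k ! : ℝ) ≠ 0 := by positivity
        push_cast
        field_simp
      rw [← h2]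
      exact ((hdiff h).hasDerivAt).sub h1
    have IH := ih (deriv g) hgd
    rw [isBigO_iff] at IH ⊢
    obtain ⟨C, hC⟩ := IH
    rw [Metric.eventually_nhds_iff] at hC
    obtain ⟨δ, hδ, hCb⟩ := hC
    refine ⟨|C|, Metric.eventually_nhds_iff.mpr ⟨δ, hδ, ?_⟩⟩
    intro h hh
    rw [Real.dist_eq, sub_zero] at hh
    have key : ∀ t ∈ Metric.closedBall (0:ℝ) |h|, ‖deriv F t‖ ≤ |C| * |h| ^ n := by
      intro t ht
      rw [Metric.mem_closedBall, Real.dist_eq, sub_zero] at ht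
      have ht' : dist t 0 < δ := by rw [Real.dist_eq, sub_zero]; exact lt_of_le_of_lt ht hh
      have hb := hCb ht'
      rw [(hFd t).deriv]
      refine le_trans hb ?_
      rw [norm_pow, Real.norm_eq_abs]
      exact mul_le_mul (le_abs_self C) (pow_le_pow_left₀ (abs_nonneg t) ht n)
        (by positivity) (abs_nonneg C)
    have hmem0 : (0:ℝ) ∈ Metric.closedBall (0:ℝ) |h| := by simp
    have hmemh : h ∈ Metric.closedBall (0:ℝ) |h| := by
      rw [Metric.mem_closedBall, Real.dist_eq, sub_zero]
    have hmain := (convex_closedBall (0:ℝ) |h|).norm_image_sub_le_of_norm_deriv_le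
      (fun t _ => ((hFd t).differentiableAt)) key hmem0 hmemh
    rw [hF0, sub_zero, sub_zero] at hmain
    refine le_trans hmain (le_of_eq ?_)
    rw [Real.norm_eq_abs, Real.norm_eq_abs, abs_pow]
    ring

open scoped ContDiff in
private theorem iteratedDeriv_affine (u : ℝ → ℝ) (hu : ContDiff ℝ ∞ u) (x m : ℝ) (k : ℕ) :
    ∀ y : ℝ, iteratedDeriv k (fun h => u (x + m * h)) y
      = m ^ k * iteratedDeriv k u (x + m * y) := by
  induction k with
  | zero => intro y; simp
  | succ k ihk =>
    intro y
    rw [iteratedDeriv_succ]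
    have hD : ContDiff ℝ ∞ (iteratedDeriv k u) := by
      rw [iteratedDeriv_eq_iterate]
      exact hu.iterate_deriv k
    have hA : HasDerivAt (fun y : ℝ => x + m * y) m y := by
      simpa using ((hasDerivAt_id y).const_mul m).const_add x
    have hDd : HasDerivAt (iteratedDeriv k u) (iteratedDeriv (k+1) u (x + m * y)) (x + m * y) := by
      rw [iteratedDeriv_succ]
      exact (hD.differentiable (by simp)).differentiableAt.hasDerivAt
    have hcomp : HasDerivAt (fun y : ℝ => iteratedDeriv k u (x + m * y))
        (iteratedDeriv (k+1) u (x + m * y) * m) y := by have := hDd.comp y hA; exact this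
    have heq : deriv (iteratedDeriv k (fun h => u (x + m * h))) y
        = deriv (fun y => m ^ k * iteratedDeriv k u (x + m * y)) y := by
      congr 1
      funext z
      exact ihk z
    rw [heq, deriv_const_mul _ hcomp.differentiableAt, hcomp.deriv]
    ring

open Finset Nat in
open scoped ContDiff in
private theorem taylor_pt (u : ℝ → ℝ) (hu : ContDiff ℝ ∞ u) (x m : ℝ) :
    (fun h : ℝ => u (x + m * h)
        - ∑ k ∈ Finset.range 10, m ^ k * iteratedDeriv k u x * h ^ k / k !) =O[𝓝 (0:ℝ)]
      fun h => h ^ 10 := by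
  have hg : ContDiff ℝ ∞ (fun h : ℝ => u (x + m * h)) :=
    hu.comp (contDiff_const.add (contDiff_const.mul contDiff_id))
  refine (taylor_bigO 10 (fun h : ℝ => u (x + m * h)) hg).congr_left fun h => ?_
  congr 1
  refine Finset.sum_congr rfl fun k _ => ?_
  rw [iteratedDeriv_affine u hu x m k 0]
  norm_num

set_option maxHeartbeats 1000000

/-- The 6th-order centered difference discretisation of the Kuramoto–Sivashinsky
right-hand side is sixth-order consistent. -/
theorem centered_6th_order_consistent (α : ℝ) (u : ℝ → ℝ) (hu : ContDiff ℝ (⊤ : ℕ∞) u) (x : ℝ) :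
    (fun h : ℝ =>
      (-(α / h) * (u x * cdel h (cmu h u) x
            - (1 / 6) * u x * cdel h (cdel h (cdel h (cmu h u))) x
            + (1 / 30) * u x * cdel h (cdel h (cdel h (cdel h (cdel h (cmu h u))))) x)
        - (α / h ^ 2) * (cdel h (cdel h u) x
            - (1 / 12) * cdel h (cdel h (cdel h (cdel h u))) x
            + (1 / 90) * cdel h (cdel h (cdel h (cdel h (cdel h (cdel h u))))) x)
        - (4 / h ^ 4) * (cdel h (cdel h (cdel h (cdel h u))) x
            - (1 / 6) * cdel h (cdel h (cdel h (cdel h (cdel h (cdel h u))))) x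
            + (7 / 240) *
                cdel h (cdel h (cdel h (cdel h (cdel h (cdel h (cdel h (cdel h u))))))) x))
      - (-(α * (u x * deriv u x + iteratedDeriv 2 u x)) - 4 * iteratedDeriv 4 u x))
    =O[𝓝[≠] (0 : ℝ)] fun h => h ^ 6 := by
  have hu' : ContDiff ℝ ((⊤ : ℕ∞) : WithTop ℕ∞) u := hu.of_le (by simp)
  set l := 𝓝[≠] (0 : ℝ) with hl
  obtain ⟨d, hd⟩ : ∃ d : ℕ → ℝ, d = fun k => iteratedDeriv k u x := ⟨_, rfl⟩
  obtain ⟨R, hRdef⟩ : ∃ R : ℝ → ℝ → ℝ, R = fun m h =>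
      u (x + m * h) - ∑ k ∈ Finset.range 10, m ^ k * d k * h ^ k / (k.factorial : ℝ) := ⟨_, rfl⟩
  have hd0 : d 0 = u x := by rw [hd]; simp
  have hR : ∀ m : ℝ, (R m) =O[l] fun h => h ^ 10 := by
    intro m
    refine ((taylor_pt u hu' x m).mono nhdsWithin_le_nhds).congr_left fun h => ?_
    rw [hRdef, hd]
  have hne_mem : ∀ᶠ h : ℝ in l, h ≠ 0 := eventually_mem_nhdsWithin
  have hdiv : ∀ (C : ℝ → ℝ) (p q : ℕ), C =O[l] (fun h => h ^ (p + q)) →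
      (fun h => C h / h ^ p) =O[l] fun h => h ^ q := by
    intro C p q hC
    rw [isBigO_iff] at hC ⊢
    obtain ⟨c, hc⟩ := hC
    refine ⟨c, ?_⟩
    filter_upwards [hc, hne_mem] with h hch hne
    simp only [Real.norm_eq_abs, abs_div, abs_pow] at hch ⊢
    rw [div_le_iff₀ (pow_pos (abs_pos.mpr hne) p)]
    refine le_trans hch (le_of_eq ?_)
    rw [pow_add]
    ring
  have hpow : ∀ p q : ℕ, q ≤ p → (fun h : ℝ => h ^ p) =O[l] fun h => h ^ q := by
    intro p q hpq
    rw [isBigO_iff]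
    refine ⟨1, ?_⟩
    have h1 : ∀ᶠ h : ℝ in l, |h| ≤ 1 := by
      have h2 : ∀ᶠ h : ℝ in 𝓝 (0:ℝ), |h| ≤ 1 := by
        filter_upwards [Metric.ball_mem_nhds (0:ℝ) one_pos] with h hh
        rw [Metric.mem_ball, Real.dist_eq, sub_zero] at hh
        exact hh.le
      exact nhdsWithin_le_nhds h2
    filter_upwards [h1] with h hh
    rw [Real.norm_eq_abs, Real.norm_eq_abs, abs_pow, abs_pow, one_mul]
    exact pow_le_pow_of_le_one (abs_nonneg h) hh hpq
  -- block identities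
  have hS1 : ∀ h : ℝ,
      cdel h (cmu h u) x - (1/6) * cdel h (cdel h (cdel h (cmu h u))) x
        + (1/30) * cdel h (cdel h (cdel h (cdel h (cdel h (cmu h u))))) x
      = h * d 1 + (1/140) * d 7 * h^7 + (1/720) * d 9 * h^9
        + ((3/4) * (R 1 h - R (-1) h) - (3/20) * (R 2 h - R (-2) h)
            + (1/60) * (R 3 h - R (-3) h)) := by
    intro h
    simp only [hRdef, cdel, cmu, Finset.sum_range_succ, Finset.sum_range_zero]
    norm_num [Nat.factorial]
    ring_nf
  have hS2 : ∀ h : ℝ,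
      cdel h (cdel h u) x - (1/12) * cdel h (cdel h (cdel h (cdel h u))) x
        + (1/90) * cdel h (cdel h (cdel h (cdel h (cdel h (cdel h u))))) x
      = h^2 * d 2 + (1/560) * d 8 * h^8
        + ((3/2) * (R 1 h + R (-1) h) - (3/20) * (R 2 h + R (-2) h)
            + (1/90) * (R 3 h + R (-3) h)) := by
    intro h
    simp only [hRdef, cdel, cmu, Finset.sum_range_succ, Finset.sum_range_zero]
    norm_num [Nat.factorial, hd0]
    ring_nf
  have hS4 : ∀ h : ℝ,
      cdel h (cdel h (cdel h (cdel h u))) x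
        - (1/6) * cdel h (cdel h (cdel h (cdel h (cdel h (cdel h u))))) x
        + (7/240) * cdel h (cdel h (cdel h (cdel h (cdel h (cdel h (cdel h (cdel h u))))))) x
      = h^4 * d 4
        + (-(122/15) * (R 1 h + R (-1) h) + (169/60) * (R 2 h + R (-2) h)
            - (2/5) * (R 3 h + R (-3) h) + (7/240) * (R 4 h + R (-4) h)) := by
    intro h
    simp only [hRdef, cdel, cmu, Finset.sum_range_succ, Finset.sum_range_zero]
    norm_num [Nat.factorial, hd0]
    ring_nf
  -- remainder combinations
  obtain ⟨A, hA⟩ : ∃ A : ℝ → ℝ, A = fun h => (3/4) * (R 1 h - R (-1) h)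
      - (3/20) * (R 2 h - R (-2) h) + (1/60) * (R 3 h - R (-3) h) := ⟨_, rfl⟩
  obtain ⟨B, hB⟩ : ∃ B : ℝ → ℝ, B = fun h => (3/2) * (R 1 h + R (-1) h)
      - (3/20) * (R 2 h + R (-2) h) + (1/90) * (R 3 h + R (-3) h) := ⟨_, rfl⟩
  obtain ⟨E, hE⟩ : ∃ E : ℝ → ℝ, E = fun h => -(122/15) * (R 1 h + R (-1) h)
      + (169/60) * (R 2 h + R (-2) h) - (2/5) * (R 3 h + R (-3) h)
      + (7/240) * (R 4 h + R (-4) h) := ⟨_, rfl⟩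
  have hAO : A =O[l] fun h => h ^ 10 := by
    rw [hA]
    exact ((((hR 1).sub (hR (-1))).const_mul_left _).sub
      (((hR 2).sub (hR (-2))).const_mul_left _)).add
      (((hR 3).sub (hR (-3))).const_mul_left _)
  have hBO : B =O[l] fun h => h ^ 10 := by
    rw [hB]
    exact ((((hR 1).add (hR (-1))).const_mul_left _).sub
      (((hR 2).add (hR (-2))).const_mul_left _)).add
      (((hR 3).add (hR (-3))).const_mul_left _)
  have hEO : E =O[l] fun h => h ^ 10 := by
    rw [hE]
    exact (((((hR 1).add (hR (-1))).const_mul_left _).add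
      (((hR 2).add (hR (-2))).const_mul_left _)).sub
      (((hR 3).add (hR (-3))).const_mul_left _)).add
      (((hR 4).add (hR (-4))).const_mul_left _)
  -- the comparison function
  obtain ⟨G, hG⟩ : ∃ G : ℝ → ℝ, G = fun h =>
      (-(α * u x) * ((1/140) * d 7 * h^6 + (1/720) * d 9 * h^8) - α * ((1/560) * d 8 * h^6))
        - (α * u x) * (A h / h ^ 1) - α * (B h / h ^ 2) - 4 * (E h / h ^ 4) := ⟨_, rfl⟩
  have hGO : G =O[l] fun h => h ^ 6 := by
    rw [hG]
    have h6 : (fun h : ℝ => h ^ 6) =O[l] fun h => h ^ 6 := isBigO_refl _ _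
    have h8 : (fun h : ℝ => h ^ 8) =O[l] fun h => h ^ 6 := hpow 8 6 (by norm_num)
    have t1 : (fun h : ℝ => -(α * u x) * ((1/140) * d 7 * h^6 + (1/720) * d 9 * h^8)
        - α * ((1/560) * d 8 * h^6)) =O[l] fun h => h ^ 6 :=
      (((h6.const_mul_left _).add (h8.const_mul_left _)).const_mul_left _).sub
        ((h6.const_mul_left _).const_mul_left _)
    have t2 : (fun h => A h / h ^ 1) =O[l] fun h => h ^ 6 :=
      (hdiv A 1 9 (by norm_num; exact hAO)).trans (hpow 9 6 (by norm_num))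
    have t3 : (fun h => B h / h ^ 2) =O[l] fun h => h ^ 6 :=
      (hdiv B 2 8 (by norm_num; exact hBO)).trans (hpow 8 6 (by norm_num))
    have t4 : (fun h => E h / h ^ 4) =O[l] fun h => h ^ 6 :=
      hdiv E 4 6 (by norm_num; exact hEO)
    exact ((t1.sub (t2.const_mul_left _)).sub (t3.const_mul_left _)).sub (t4.const_mul_left _)
  refine hGO.congr' ?_ EventuallyEq.rfl
  symm
  filter_upwards [hne_mem] with h hh1
  have hd1 : deriv u x = d 1 := by rw [hd]; simp [iteratedDeriv_one]
  have hd2 : iteratedDeriv 2 u x = d 2 := by rw [hd]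
  have hd4 : iteratedDeriv 4 u x = d 4 := by rw [hd]
  have hh2 : (h : ℝ) ^ 1 ≠ 0 := pow_ne_zero _ hh1
  have hh3 : (h : ℝ) ^ 2 ≠ 0 := pow_ne_zero _ hh1
  have hh5 : (h : ℝ) ^ 4 ≠ 0 := pow_ne_zero _ hh1
  have e1 : (cdel h (cmu h u) x - (1/6) * cdel h (cdel h (cdel h (cmu h u))) x
        + (1/30) * cdel h (cdel h (cdel h (cdel h (cdel h (cmu h u))))) x) / h ^ 1
      = d 1 + (1/140) * d 7 * h^6 + (1/720) * d 9 * h^8 + A h / h ^ 1 := by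
    rw [hS1 h, hA]
    field_simp
  have e2 : (cdel h (cdel h u) x - (1/12) * cdel h (cdel h (cdel h (cdel h u))) x
        + (1/90) * cdel h (cdel h (cdel h (cdel h (cdel h (cdel h u))))) x) / h ^ 2
      = d 2 + (1/560) * d 8 * h^6 + B h / h ^ 2 := by
    rw [hS2 h, hB]
    field_simp
  have e3 : (cdel h (cdel h (cdel h (cdel h u))) x
        - (1/6) * cdel h (cdel h (cdel h (cdel h (cdel h (cdel h u))))) x
        + (7/240) * cdel h (cdel h (cdel h (cdel h (cdel h (cdel h (cdel h (cdel h u))))))) x)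
          / h ^ 4
      = d 4 + E h / h ^ 4 := by
    rw [hS4 h, hE]
    field_simp
  rw [hG, hd1, hd2, hd4]
  linear_combination (-(α * u x)) * e1 + (-α) * e2 + (-4) * e3
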